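/- arXiv:1503.02119 — 7 statements merged into one kernel-verified Lean document; each statement's English description precedes it below -/
import Mathlib

section
/- Uniqueness criterion (Theorem 2, via criterion (C3)): Let q be a totally stable, conservative Q-matrix on a countable set E. Then for every λ > 0 the only λ-solution is u = 0 (equivalently, the Q-process is unique) if and only if the following two conditions hold simultaneously: (U1) there exist subsets E_n ⊆ E with E_n ⊆ E_{n+1}, ⋃_n E_n = E, and sup_{i ∈ E_n} q_i < ∞ for every n, together with a nonnegative function φ : E → [0,∞) such that lim_{n→∞} inf_{i ∉ E_n} φ(i) = ∞ (with the convention inf_∅ = ∞, i.e., for every M there is N such that for all n ≥ N and all i ∉ E_n one has φ(i) ≥ M); and (U2) there exists a constant c ∈ ℝ such that Qφ ≤ cφ. -/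
open scoped BigOperators Classical

/-- `q` is a totally stable, conservative Q-matrix on `E`:
off-diagonal entries are nonnegative, the jump rates `q_i = -q i i` are
nonnegative (and finite), and the off-diagonal row sums equal `q_i`. -/
def IsQMatrix {E : Type*} (q : E → E → ℝ) : Prop :=
  (∀ i j, i ≠ j → 0 ≤ q i j) ∧ (∀ i, q i i ≤ 0) ∧
    ∀ i, HasSum (fun j => if j = i then 0 else q i j) (-q i i)

/-- `u` is a `λ`-solution of `(λ I - Q) u = 0`, `0 ≤ u ≤ 1`:
`∑_{j ≠ i} q(i,j) u(j) = (λ + q_i) u(i)` for every `i`. -/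
def IsLamSolution {E : Type*} (q : E → E → ℝ) (lam : ℝ) (u : E → ℝ) : Prop :=
  (∀ i, 0 ≤ u i ∧ u i ≤ 1) ∧
    ∀ i, HasSum (fun j => if j = i then 0 else q i j * u j) ((lam + -q i i) * u i)

/-- The drift condition `Qφ ≤ cφ`: for every `i`, the series
`∑_{j ≠ i} q(i,j) φ(j)` is finite and
`∑_{j ≠ i} q(i,j) φ(j) - q_i φ(i) ≤ c φ(i)`. -/
def DriftLE {E : Type*} (q : E → E → ℝ) (φ : E → ℝ) (c : ℝ) : Prop :=
  ∀ i, Summable (fun j => if j = i then 0 else q i j * φ j) ∧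
    (∑' j, if j = i then 0 else q i j * φ j) - (-q i i) * φ i ≤ c * φ i

/-!
Sufficiency is a maximum principle. By concavity of `log`, `ψ = log (1 + φ) + c⁺ / λ` satisfies
`Qψ ≤ c⁺ ≤ λ ψ`, so `ψ` is a Lyapunov function for the given `λ`. For a `λ`-solution `u` and
`ε > 0`, `w = u - ε ψ` satisfies `λ w i ≤ q_i (sup w - w i)`; as `w ≤ 0` where `ψ ≥ 1/ε` and the
rates are bounded on `{ψ < 1/ε}`, this forces `sup w ≤ 0`, i.e. `u ≤ ε ψ` for every `ε > 0`.

Necessity: let `h_b i = E_i e^{-τ_b}`, where `τ_b` is the hitting time of `{q > b}`. The decreasing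
limit of `h_b` is a `1`-solution, hence `0` by uniqueness. Along a sparse sequence `b_m` the series
`φ = ∑ m, h_{b_m}` converges; it satisfies `Qφ ≤ φ`, and `φ ≥ n + 1` wherever `q > b_n`, so the
rates are bounded on the sublevel sets `{φ ≤ n}`.
-/

open Filter Topology ENNReal

section

variable {E : Type*} {q : E → E → ℝ}

lemma IsQMatrix.hasSum_mul_sub_self (hq : IsQMatrix q) {f : E → ℝ} {i : E} {s : ℝ}
    (hf : HasSum (fun j => if j = i then 0 else q i j * f j) s) :
    HasSum (fun j => if j = i then 0 else q i j * (f j - f i)) (s - -q i i * f i) := by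
  refine (hf.sub ((hq.2.2 i).mul_right (f i))).congr_fun fun j => ?_
  split_ifs <;> ring

lemma log_sub_log_le_sub_div {a b : ℝ} (ha : 0 < a) (hb : 0 < b) :
    Real.log b - Real.log a ≤ (b - a) / a := by
  have := Real.log_le_sub_one_of_pos (div_pos hb ha)
  rwa [Real.log_div hb.ne' ha.ne', div_sub_one ha.ne'] at this

lemma DriftLE.log_one_add (hq : IsQMatrix q) {φ : E → ℝ} {c lam : ℝ} (hφ0 : ∀ i, 0 ≤ φ i)
    (hφ : DriftLE q φ c) (hlam : 0 < lam) :
    DriftLE q (fun i => Real.log (1 + φ i) + max c 0 / lam) lam := by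
  set a := max c 0 / lam
  set g : E → ℝ := fun i => Real.log (1 + φ i) + a
  have ha : 0 ≤ a := div_nonneg (le_max_right c 0) hlam.le
  have hpos : ∀ j, 0 < 1 + φ j := fun j => by linarith [hφ0 j]
  have hg0 : ∀ j, 0 ≤ g j := fun j => add_nonneg (Real.log_nonneg (by linarith [hφ0 j])) ha
  intro i
  obtain ⟨hsφ, hdφ⟩ := hφ i
  have hsg : Summable fun j => if j = i then 0 else q i j * g j := by
    refine Summable.of_nonneg_of_le (fun j => ?_) (fun j => ?_)
      (hsφ.add ((hq.2.2 i).summable.mul_left a))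
    · split_ifs with h
      exacts [le_rfl, mul_nonneg (hq.1 i j (Ne.symm h)) (hg0 j)]
    · split_ifs with h
      · simp
      · nlinarith [hq.1 i j (Ne.symm h), Real.log_le_sub_one_of_pos (hpos j)]
  -- concavity of `log` linearises the increments of `g` around `φ i`
  have hincr : ∀ j, (if j = i then 0 else q i j * (g j - g i)) ≤
      (if j = i then 0 else q i j * (φ j - φ i)) / (1 + φ i) := fun j => by
    split_ifs with h
    · simp
    rw [mul_div_assoc]
    refine mul_le_mul_of_nonneg_left ?_ (hq.1 i j (Ne.symm h))
    calc g j - g i = Real.log (1 + φ j) - Real.log (1 + φ i) := by simp only [g]; ring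
      _ ≤ (1 + φ j - (1 + φ i)) / (1 + φ i) := log_sub_log_le_sub_div (hpos i) (hpos j)
      _ = (φ j - φ i) / (1 + φ i) := by ring
  refine ⟨hsg, ?_⟩
  calc (∑' j, if j = i then 0 else q i j * g j) - -q i i * g i
      ≤ ((∑' j, if j = i then 0 else q i j * φ j) - -q i i * φ i) / (1 + φ i) :=
        hasSum_le hincr (hq.hasSum_mul_sub_self hsg.hasSum)
          ((hq.hasSum_mul_sub_self hsφ.hasSum).div_const (1 + φ i))
    _ ≤ c * φ i / (1 + φ i) := div_le_div_of_nonneg_right hdφ (hpos i).le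
    _ ≤ max c 0 := by
        rw [div_le_iff₀ (hpos i)]
        nlinarith [le_max_left c 0, le_max_right c 0, hφ0 i]
    _ = lam * a := (mul_div_cancel₀ _ hlam.ne').symm
    _ ≤ lam * g i := mul_le_mul_of_nonneg_left
        (le_add_of_nonneg_left (Real.log_nonneg (by linarith [hφ0 i]))) hlam.le

lemma IsLamSolution.mul_sub_le (hq : IsQMatrix q) {lam : ℝ} {u ψ : E → ℝ}
    (hu : IsLamSolution q lam u) (hψ : DriftLE q ψ lam) {ε S : ℝ} (hε : 0 ≤ ε)
    (hS : ∀ j, u j - ε * ψ j ≤ S) (i : E) :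
    lam * (u i - ε * ψ i) ≤ -q i i * (S - (u i - ε * ψ i)) := by
  obtain ⟨hsψ, hdψ⟩ := hψ i
  have hsum : HasSum (fun j => if j = i then 0 else q i j * (u j - ε * ψ j))
      ((lam + -q i i) * u i - ε * ∑' j, if j = i then 0 else q i j * ψ j) := by
    refine ((hu.2 i).sub (hsψ.hasSum.mul_left ε)).congr_fun fun j => ?_
    split_ifs <;> ring
  have hterm : ∀ j, (if j = i then 0 else q i j * (u j - ε * ψ j)) ≤
      (if j = i then 0 else q i j) * S := fun j => by
    split_ifs with h
    · simp
    · exact mul_le_mul_of_nonneg_left (hS j) (hq.1 i j (Ne.symm h))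
  have hle := hasSum_le hterm hsum ((hq.2.2 i).mul_right S)
  have := mul_le_mul_of_nonneg_left hdψ hε
  linarith

lemma IsLamSolution.le_mul_of_driftLE (hq : IsQMatrix q) {lam : ℝ} {u ψ : E → ℝ}
    (hlam : 0 < lam) (hu : IsLamSolution q lam u) (hψ0 : ∀ i, 0 ≤ ψ i) (hψ : DriftLE q ψ lam)
    (hrate : ∀ M : ℝ, ∃ K, ∀ i, ψ i < M → -q i i ≤ K)
    {ε : ℝ} (hε : 0 < ε) (i : E) : u i ≤ ε * ψ i := by
  obtain ⟨K₀, hK₀⟩ := hrate ε⁻¹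
  set K := max K₀ 0
  have : Nonempty E := ⟨i⟩
  set w : E → ℝ := fun j => u j - ε * ψ j
  have hbdd : BddAbove (Set.range w) :=
    ⟨1, Set.forall_mem_range.2 fun j => by
      nlinarith [(hu.1 j).2, hψ0 j]⟩
  have hout : ∀ j, ε⁻¹ ≤ ψ j → w j ≤ 0 := fun j hj => by
    have := mul_le_mul_of_nonneg_left hj hε.le
    rw [mul_inv_cancel₀ hε.ne'] at this
    simp only [w]
    linarith [(hu.1 j).2]
  -- a positive supremum of `w` is approached only where `ψ < ε⁻¹`, where the rates are at most `K`
  have hsup : ⨆ j, w j ≤ 0 := by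
    set S := ⨆ j, w j
    by_contra! hS
    have hK : 0 < lam + K := by positivity
    have hw : ∀ j, w j ≤ K * S / (lam + K) := fun j => by
      rw [le_div_iff₀ hK]
      by_cases hj : ψ j < ε⁻¹
      · have := hu.mul_sub_le hq hψ hε.le (fun j => le_ciSup hbdd j) j
        have hSw : 0 ≤ S - w j := sub_nonneg.2 (le_ciSup hbdd j)
        nlinarith [mul_le_mul_of_nonneg_right ((hK₀ j hj).trans (le_max_left K₀ 0)) hSw]
      · nlinarith [hout j (not_lt.1 hj), le_max_right K₀ 0]
    have : S ≤ K * S / (lam + K) := ciSup_le hw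
    rw [le_div_iff₀ hK] at this
    nlinarith
  have := (le_ciSup hbdd i).trans hsup
  simp only [w] at this
  linarith

lemma IsLamSolution.eq_zero_of_driftLE_lam (hq : IsQMatrix q) {lam : ℝ} {u ψ : E → ℝ}
    (hlam : 0 < lam) (hu : IsLamSolution q lam u) (hψ0 : ∀ i, 0 ≤ ψ i) (hψ : DriftLE q ψ lam)
    (hrate : ∀ M : ℝ, ∃ K, ∀ i, ψ i < M → -q i i ≤ K) :
    u = 0 := by
  funext i
  refine le_antisymm ?_ (hu.1 i).1
  change u i ≤ 0
  by_contra! hi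
  have hε : 0 < u i / (ψ i + 1) := div_pos hi (by linarith [hψ0 i])
  have := hu.le_mul_of_driftLE hq hlam hψ0 hψ hrate hε i
  rw [div_mul_eq_mul_div, le_div_iff₀ (by linarith [hψ0 i])] at this
  nlinarith

lemma IsLamSolution.eq_zero_of_driftLE (hq : IsQMatrix q) {lam c : ℝ} {u φ : E → ℝ}
    (hlam : 0 < lam) (hu : IsLamSolution q lam u) (hφ0 : ∀ i, 0 ≤ φ i) (hφ : DriftLE q φ c)
    (hrate : ∀ M : ℝ, ∃ K, ∀ i, φ i < M → -q i i ≤ K) : u = 0 := by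
  have ha : 0 ≤ max c 0 / lam := div_nonneg (le_max_right c 0) hlam.le
  refine hu.eq_zero_of_driftLE_lam hq hlam (fun i => ?_) (hφ.log_one_add hq hφ0 hlam) fun M => ?_
  · exact add_nonneg (Real.log_nonneg (by linarith [hφ0 i])) ha
  · obtain ⟨K, hK⟩ := hrate (Real.exp M)
    refine ⟨K, fun i hi => hK i ?_⟩
    have : Real.log (1 + φ i) < M := by linarith
    linarith [(Real.log_lt_iff_lt_exp (by linarith [hφ0 i])).1 this]

-- The Lyapunov function is built in `ℝ≥0∞`, a complete lattice in which every series converges.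
noncomputable def jumpRate (q : E → E → ℝ) (i j : E) : ℝ≥0∞ :=
  ENNReal.ofReal (if j = i then 0 else q i j)

noncomputable def exitRate (q : E → E → ℝ) (i : E) : ℝ≥0∞ := ENNReal.ofReal (-q i i)

noncomputable def jumpSum (q : E → E → ℝ) (f : E → ℝ≥0∞) (i : E) : ℝ≥0∞ :=
  ∑' j, jumpRate q i j * f j

lemma jumpRate_ne_top (i j : E) : jumpRate q i j ≠ ∞ := ofReal_ne_top

lemma jumpSum_mono {f g : E → ℝ≥0∞} (hfg : f ≤ g) (i : E) : jumpSum q f i ≤ jumpSum q g i :=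
  ENNReal.tsum_le_tsum fun j => mul_le_mul_right (hfg j) _

lemma one_add_exitRate_ne_zero (i : E) : 1 + exitRate q i ≠ 0 := by simp

lemma one_add_exitRate_ne_top (i : E) : 1 + exitRate q i ≠ ∞ := by simp [exitRate]

lemma IsQMatrix.tsum_jumpRate (hq : IsQMatrix q) (i : E) : ∑' j, jumpRate q i j = exitRate q i := by
  have hnn : ∀ j, 0 ≤ if j = i then 0 else q i j := fun j => by
    split_ifs with h
    · exact le_rfl
    · exact hq.1 i j (Ne.symm h)
  unfold jumpRate
  rw [← ENNReal.ofReal_tsum_of_nonneg hnn (hq.2.2 i).summable,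
    (hq.2.2 i).tsum_eq, exitRate]

lemma IsQMatrix.jumpSum_le_exitRate (hq : IsQMatrix q) {f : E → ℝ≥0∞} (hf : f ≤ 1) (i : E) :
    jumpSum q f i ≤ exitRate q i := by
  simpa [jumpSum, hq.tsum_jumpRate] using jumpSum_mono (q := q) hf i

lemma IsQMatrix.hasSum_jumpSum_toReal (hq : IsQMatrix q) {f : E → ℝ≥0∞} (hf : ∀ j, f j ≠ ∞)
    {i : E} (hs : jumpSum q f i ≠ ∞) :
    HasSum (fun j => if j = i then 0 else q i j * (f j).toReal) (jumpSum q f i).toReal := by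
  rw [jumpSum, ENNReal.tsum_toReal_eq fun j => ENNReal.mul_ne_top (jumpRate_ne_top i j) (hf j)]
  refine (ENNReal.hasSum_toReal hs).congr_fun fun j => ?_
  rw [ENNReal.toReal_mul, jumpRate]
  split_ifs with h
  · simp
  · rw [ENNReal.toReal_ofReal (hq.1 i j (Ne.symm h))]

lemma IsQMatrix.isLamSolution_toReal (hq : IsQMatrix q) {lam : ℝ} (hlam : 0 ≤ lam)
    {v : E → ℝ≥0∞} (hv : v ≤ 1)
    (hsol : ∀ i, jumpSum q v i = (ENNReal.ofReal lam + exitRate q i) * v i) :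
    IsLamSolution q lam (fun i => (v i).toReal) := by
  have hv_ne_top : ∀ i, v i ≠ ∞ := fun i => ne_top_of_le_ne_top one_ne_top (hv i)
  refine ⟨fun i => ⟨ENNReal.toReal_nonneg, ENNReal.toReal_le_of_le_ofReal zero_le_one
    (by simpa using hv i)⟩, fun i => ?_⟩
  have hs : jumpSum q v i ≠ ∞ := by
    rw [hsol]
    exact ENNReal.mul_ne_top (by simp [exitRate]) (hv_ne_top i)
  convert hq.hasSum_jumpSum_toReal hv_ne_top hs using 1
  rw [hsol, ENNReal.toReal_mul, exitRate, ENNReal.toReal_add ofReal_ne_top ofReal_ne_top,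
    ENNReal.toReal_ofReal hlam, ENNReal.toReal_ofReal (neg_nonneg.2 (hq.2.1 i))]

lemma IsQMatrix.driftLE_toReal (hq : IsQMatrix q) {c : ℝ} (hc : 0 ≤ c) {ψ : E → ℝ≥0∞}
    (hψ : ∀ i, ψ i ≠ ∞)
    (hdrift : ∀ i, jumpSum q ψ i ≤ (ENNReal.ofReal c + exitRate q i) * ψ i) :
    DriftLE q (fun i => (ψ i).toReal) c := by
  intro i
  have hrhs : (ENNReal.ofReal c + exitRate q i) * ψ i ≠ ∞ :=
    ENNReal.mul_ne_top (by simp [exitRate]) (hψ i)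
  have hsum := hq.hasSum_jumpSum_toReal hψ (ne_top_of_le_ne_top hrhs (hdrift i))
  refine ⟨hsum.summable, ?_⟩
  have hle := ENNReal.toReal_mono hrhs (hdrift i)
  rw [ENNReal.toReal_mul, exitRate, ENNReal.toReal_add ofReal_ne_top ofReal_ne_top,
    ENNReal.toReal_ofReal hc, ENNReal.toReal_ofReal (neg_nonneg.2 (hq.2.1 i))] at hle
  rw [hsum.tsum_eq]
  linarith

lemma jumpSum_tsum_le {c : ℝ≥0∞} {g : ℕ → E → ℝ≥0∞}
    (hg : ∀ m i, jumpSum q (g m) i ≤ (c + exitRate q i) * g m i) (i : E) :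
    jumpSum q (fun j => ∑' m, g m j) i ≤ (c + exitRate q i) * ∑' m, g m i :=
  calc jumpSum q (fun j => ∑' m, g m j) i = ∑' m, jumpSum q (g m) i := by
        simp only [jumpSum, ← ENNReal.tsum_mul_left]
        exact ENNReal.tsum_comm
    _ ≤ ∑' m, (c + exitRate q i) * g m i := ENNReal.tsum_le_tsum fun m => hg m i
    _ = (c + exitRate q i) * ∑' m, g m i := ENNReal.tsum_mul_left

noncomputable def hitOp (q : E → E → ℝ) (B : Set E) : (E → ℝ≥0∞) →o (E → ℝ≥0∞) where
  toFun f i := if i ∈ B then 1 else jumpSum q f i / (1 + exitRate q i)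
  monotone' f g hfg i := by
    dsimp only
    split_ifs
    · exact le_rfl
    · exact ENNReal.div_le_div_right (jumpSum_mono hfg i) _

lemma hitOp_apply (B : Set E) (f : E → ℝ≥0∞) (i : E) :
    hitOp q B f i = if i ∈ B then 1 else jumpSum q f i / (1 + exitRate q i) := rfl

-- The probability of hitting `B` before an independent exponential time of rate `1`.
noncomputable def hittingProb (q : E → E → ℝ) (B : Set E) : E → ℝ≥0∞ := OrderHom.lfp (hitOp q B)

lemma hitOp_hittingProb (B : Set E) : hitOp q B (hittingProb q B) = hittingProb q B :=
  OrderHom.map_lfp _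

lemma hittingProb_of_mem {B : Set E} {i : E} (hi : i ∈ B) : hittingProb q B i = 1 := by
  rw [← hitOp_hittingProb, hitOp_apply, if_pos hi]

lemma IsQMatrix.hitOp_le_one (hq : IsQMatrix q) (B : Set E) {f : E → ℝ≥0∞} (hf : f ≤ 1) :
    hitOp q B f ≤ 1 := fun i => by
  rw [hitOp_apply]
  split_ifs
  · exact le_rfl
  · exact ENNReal.div_le_of_le_mul ((hq.jumpSum_le_exitRate hf i).trans (by simp))

lemma IsQMatrix.hittingProb_le_one (hq : IsQMatrix q) (B : Set E) : hittingProb q B ≤ 1 :=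
  OrderHom.lfp_le _ (hq.hitOp_le_one B le_rfl)

lemma IsQMatrix.hittingProb_mono (hq : IsQMatrix q) {B B' : Set E} (hBB' : B ⊆ B') :
    hittingProb q B ≤ hittingProb q B' := by
  refine OrderHom.lfp_le _ fun i => ?_
  by_cases hiB : i ∈ B
  · rw [hitOp_apply, if_pos hiB, hittingProb_of_mem (hBB' hiB)]
  by_cases hiB' : i ∈ B'
  · rw [hittingProb_of_mem hiB']
    exact hq.hitOp_le_one B (hq.hittingProb_le_one B') i
  · conv_rhs => rw [← hitOp_hittingProb]
    rw [hitOp_apply, hitOp_apply, if_neg hiB, if_neg hiB']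

lemma jumpSum_hittingProb_of_notMem {B : Set E} {i : E} (hi : i ∉ B) :
    jumpSum q (hittingProb q B) i = (1 + exitRate q i) * hittingProb q B i := by
  conv_rhs => rw [← hitOp_hittingProb]
  rw [hitOp_apply, if_neg hi]
  exact (ENNReal.mul_div_cancel (one_add_exitRate_ne_zero i) (one_add_exitRate_ne_top i)).symm

lemma IsQMatrix.jumpSum_hittingProb_le (hq : IsQMatrix q) (B : Set E) (i : E) :
    jumpSum q (hittingProb q B) i ≤ (1 + exitRate q i) * hittingProb q B i := by
  by_cases hi : i ∈ B
  · rw [hittingProb_of_mem hi, mul_one]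
    exact (hq.jumpSum_le_exitRate (hq.hittingProb_le_one B) i).trans le_add_self
  · exact (jumpSum_hittingProb_of_notMem hi).le

lemma ENNReal.tsum_iInf_of_antitone {α : Type*} {f : ℕ → α → ℝ≥0∞} (hf : Antitone f)
    (h0 : ∑' a, f 0 a ≠ ∞) : ∑' a, ⨅ n, f n a = ⨅ n, ∑' a, f n a := by
  let _ : MeasurableSpace α := ⊤
  simp only [← MeasureTheory.lintegral_count] at h0 ⊢
  exact MeasureTheory.lintegral_iInf (fun n => measurable_from_top) hf h0

lemma IsQMatrix.jumpSum_iInf (hq : IsQMatrix q) {h : ℕ → E → ℝ≥0∞} (hanti : Antitone h)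
    (h1 : h 0 ≤ 1) (i : E) : jumpSum q (fun j => ⨅ n, h n j) i = ⨅ n, jumpSum q (h n) i := by
  have hmul : ∀ j, jumpRate q i j * ⨅ n, h n j = ⨅ n, jumpRate q i j * h n j := fun j =>
    ENNReal.mul_iInf fun htop => absurd htop (jumpRate_ne_top i j)
  simp only [jumpSum, hmul]
  refine ENNReal.tsum_iInf_of_antitone (fun n n' hn j => mul_le_mul_right (hanti hn j) _) ?_
  exact ne_top_of_le_ne_top ofReal_ne_top (hq.jumpSum_le_exitRate h1 i)

lemma IsQMatrix.tendsto_hittingProb_of_unique (hq : IsQMatrix q)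
    (huniq : ∀ u, IsLamSolution q 1 u → u = 0) (i : E) :
    Tendsto (fun b : ℕ => hittingProb q {j | (b : ℝ) < -q j j} i) atTop (𝓝 0) := by
  set h : ℕ → E → ℝ≥0∞ := fun b => hittingProb q {j | (b : ℝ) < -q j j}
  have hanti : Antitone h := fun b b' hbb' =>
    hq.hittingProb_mono fun j (hj : (b' : ℝ) < _) => (Nat.cast_le.2 hbb').trans_lt hj
  set v : E → ℝ≥0∞ := fun j => ⨅ b, h b j
  have hv : v ≤ 1 := fun j => (iInf_le _ 0).trans (hq.hittingProb_le_one _ j)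
  -- every state lies outside `{q > b}` for `b` large, where `h b` solves the equation
  have hsol : ∀ j, jumpSum q v j = (ENNReal.ofReal 1 + exitRate q j) * v j := fun j => by
    rw [hq.jumpSum_iInf hanti (hq.hittingProb_le_one _), ENNReal.ofReal_one,
      ENNReal.mul_iInf fun htop => absurd htop (one_add_exitRate_ne_top j)]
    refine le_antisymm (iInf_mono fun b => hq.jumpSum_hittingProb_le _ j) (le_iInf fun b => ?_)
    set b' := max b ⌈-q j j⌉₊
    have hj : j ∉ {j | (b' : ℝ) < -q j j} := fun hj =>
      ((Nat.le_ceil (-q j j)).trans (Nat.cast_le.2 (le_max_right b _))).not_gt hj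
    calc ⨅ b, (1 + exitRate q j) * h b j ≤ (1 + exitRate q j) * h b' j := iInf_le _ b'
      _ = jumpSum q (h b') j := (jumpSum_hittingProb_of_notMem hj).symm
      _ ≤ jumpSum q (h b) j := jumpSum_mono (hanti (le_max_left b _)) j
  have hv0 : v i = 0 := by
    have := congrFun (huniq _ (hq.isLamSolution_toReal zero_le_one hv hsol)) i
    exact (ENNReal.toReal_eq_zero_iff _).1 this |>.resolve_right
      (ne_top_of_le_ne_top one_ne_top (hv i))
  rw [← hv0]
  exact tendsto_atTop_iInf fun b b' hbb' => hanti hbb' i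

lemma exists_strictMono_tsum_ne_top [Countable E] {f : ℕ → E → ℝ≥0∞} (hf1 : ∀ k, f k ≤ 1)
    (hf : ∀ i, Tendsto (fun k => f k i) atTop (𝓝 0)) :
    ∃ b : ℕ → ℕ, StrictMono b ∧ ∀ i, ∑' m, f (b m) i ≠ ∞ := by
  obtain ⟨ι, hι⟩ := Countable.exists_injective_nat E
  -- diagonal extraction: `f (b m) ≤ 2⁻¹ ^ m` on the finitely many states with `ι i ≤ m`
  obtain ⟨b, hb, hsmall⟩ := extraction_forall_of_eventually
    (P := fun m k => ∀ i ∈ {i | ι i ≤ m}, f k i ≤ 2⁻¹ ^ m) fun m =>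
      (eventually_all_finite ((Set.finite_le_nat m).preimage hι.injOn)).2 fun i _ =>
        ((hf i).eventually (gt_mem_nhds (ENNReal.pow_pos (by norm_num) m))).mono
          fun k hk => hk.le
  refine ⟨b, hb, fun i => ?_⟩
  have hbound : ∀ m, f (b m) i ≤ 2 ^ ι i * 2⁻¹ ^ m := fun m => by
    rcases le_or_gt (ι i) m with hm | hm
    · exact (hsmall m i hm).trans (le_mul_of_one_le_left' (one_le_pow₀ one_le_two))
    · calc f (b m) i ≤ 1 := hf1 _ i
        _ = 2 ^ m * 2⁻¹ ^ m := by
          rw [← mul_pow, ENNReal.mul_inv_cancel two_ne_zero ofNat_ne_top, one_pow]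
        _ ≤ 2 ^ ι i * 2⁻¹ ^ m := by gcongr; exact one_le_two
  refine ne_top_of_le_ne_top ?_ (ENNReal.tsum_le_tsum hbound)
  rw [ENNReal.tsum_mul_left, ENNReal.tsum_geometric, ENNReal.one_sub_inv_two, inv_inv]
  exact ENNReal.mul_ne_top (ENNReal.pow_ne_top ofNat_ne_top) ofNat_ne_top

theorem IsQMatrix.exists_lyapunov_of_unique [Countable E] (hq : IsQMatrix q)
    (huniq : ∀ u, IsLamSolution q 1 u → u = 0) :
    ∃ (En : ℕ → Set E) (φ : E → ℝ),
      (∀ n, En n ⊆ En (n + 1)) ∧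
      (⋃ n, En n) = Set.univ ∧
      (∀ n, ∃ M : ℝ, ∀ i ∈ En n, -q i i ≤ M) ∧
      (∀ i, 0 ≤ φ i) ∧
      (∀ M : ℝ, ∃ N : ℕ, ∀ n ≥ N, ∀ i ∉ En n, M ≤ φ i) ∧
      (∃ c : ℝ, DriftLE q φ c) := by
  set h : ℕ → E → ℝ≥0∞ := fun b => hittingProb q {j | (b : ℝ) < -q j j}
  obtain ⟨b, hb, hfin⟩ := exists_strictMono_tsum_ne_top (f := h)
    (fun _ => hq.hittingProb_le_one _) (hq.tendsto_hittingProb_of_unique huniq)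
  set Φ : E → ℝ≥0∞ := fun i => ∑' m, h (b m) i
  have hdrift : ∀ i, jumpSum q Φ i ≤ (ENNReal.ofReal 1 + exitRate q i) * Φ i := by
    rw [ENNReal.ofReal_one]
    exact jumpSum_tsum_le fun m => hq.jumpSum_hittingProb_le _
  -- a state with rate above `b n` lies in the first `n + 1` sets `{q > b m}`, so `Φ ≥ n + 1` there
  have hrate : ∀ (n : ℕ) i, (Φ i).toReal ≤ n → -q i i ≤ b n := fun n i hi => by
    by_contra! hq_i
    have hsum : ((n + 1 : ℕ) : ℝ≥0∞) ≤ Φ i :=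
      calc ((n + 1 : ℕ) : ℝ≥0∞) = ∑ m ∈ Finset.range (n + 1), 1 := by simp
        _ = ∑ m ∈ Finset.range (n + 1), h (b m) i :=
          Finset.sum_congr rfl fun m hm => (hittingProb_of_mem (B := {j | (b m : ℝ) < -q j j}) <|
            (Nat.cast_le.2 (hb.monotone (Finset.mem_range_succ_iff.1 hm))).trans_lt hq_i).symm
        _ ≤ Φ i := ENNReal.sum_le_tsum _
    have := ENNReal.toReal_mono (hfin i) hsum
    rw [ENNReal.toReal_natCast, Nat.cast_succ] at this
    linarith [this.trans hi]
  refine ⟨fun n => {i | (Φ i).toReal ≤ n}, fun i => (Φ i).toReal,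
    fun n i (hi : (Φ i).toReal ≤ n) => hi.trans (Nat.cast_le.2 n.le_succ),
    Set.eq_univ_of_forall fun i => Set.mem_iUnion.2 ⟨⌈(Φ i).toReal⌉₊, Nat.le_ceil (Φ i).toReal⟩,
    fun n => ⟨b n, hrate n⟩, fun i => ENNReal.toReal_nonneg, fun M => ⟨⌈M⌉₊, fun n hn i hi => ?_⟩,
    1, hq.driftLE_toReal zero_le_one hfin hdrift⟩
  exact (Nat.le_ceil M).trans ((Nat.cast_le.2 hn).trans (not_le.1 hi).le)

end

/-- Uniqueness criterion (Theorem 2, via criterion (C3)): the `Q`-process is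
unique (i.e. for every `λ > 0` the only `λ`-solution is `0`) iff conditions
(U1) and (U2) hold simultaneously. -/
theorem uniqueness_criterion {E : Type*} [Countable E] (q : E → E → ℝ)
    (hq : IsQMatrix q) :
    (∀ lam : ℝ, 0 < lam → ∀ u : E → ℝ, IsLamSolution q lam u → u = 0) ↔
      ∃ (En : ℕ → Set E) (φ : E → ℝ),
        -- (U1)
        (∀ n, En n ⊆ En (n + 1)) ∧
        (⋃ n, En n) = Set.univ ∧
        (∀ n, ∃ M : ℝ, ∀ i ∈ En n, -q i i ≤ M) ∧
        (∀ i, 0 ≤ φ i) ∧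
        (∀ M : ℝ, ∃ N : ℕ, ∀ n ≥ N, ∀ i ∉ En n, M ≤ φ i) ∧
        -- (U2)
        (∃ c : ℝ, DriftLE q φ c) := by
  refine ⟨fun huniq => hq.exists_lyapunov_of_unique (huniq 1 one_pos), ?_⟩
  rintro ⟨En, φ, -, -, hEn_rate, hφ0, hφ_large, c, hφ⟩ lam hlam u hu
  refine hu.eq_zero_of_driftLE hq hlam hφ0 hφ fun M => ?_
  obtain ⟨N, hN⟩ := hφ_large M
  obtain ⟨K, hK⟩ := hEn_rate N
  exact ⟨K, fun i hi => hK i (by_contra fun hiN => (hN N le_rfl i hiN).not_gt hi)⟩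
end

section
/- Corollary 3: Let q be a totally stable, conservative Q-matrix on a countable set E. Suppose there exist a function φ : E → [0,∞) with φ(i) ≥ q_i for every i, and a constant c ∈ ℝ, such that Qφ ≤ cφ. Then for every λ > 0 the only λ-solution is u = 0 (equivalently, the Q-process is unique). -/
open scoped BigOperators Classical

/-- The drift condition `Qφ ≥ cφ`: for every `i`, the series
`∑_{j ≠ i} q(i,j) φ(j)` converges and
`∑_{j ≠ i} q(i,j) φ(j) - q_i φ(i) ≥ c φ(i)`. -/
def DriftGE {E : Type*} (q : E → E → ℝ) (φ : E → ℝ) (c : ℝ) : Prop :=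
  ∀ i, Summable (fun j => if j = i then 0 else q i j * φ j) ∧
    c * φ i ≤ (∑' j, if j = i then 0 else q i j * φ j) - (-q i i) * φ i

/-!
For a `λ`-solution `u` and a Lyapunov function `h ≥ 0` with bounded drift `Qh ≤ C`, look at
`u - ε h`. Near its supremum `h` is bounded, so if the jump rates are bounded on sublevel sets of
`h`, the equation `λ u(i) = ∑_{j ≠ i} q(i,j) (u(j) - u(i))` at a near-maximiser gives
`λ sup (u - ε h) ≤ ε C`; letting `ε → 0` yields `u ≤ 0`. Under `Qφ ≤ cφ` and `φ ≥ q_i`, the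
function `h = log (1 + φ)` is such a Lyapunov function: concavity of `log` gives
`Qh ≤ Qφ / (1 + φ) ≤ max c 0`, and `h ≤ M` forces `q_i ≤ φ ≤ exp M`.
-/

open Filter Topology

theorem Real.log_one_add_sub_log_one_add_le {x y : ℝ} (hx : 0 ≤ x) (hy : 0 ≤ y) :
    Real.log (1 + y) - Real.log (1 + x) ≤ (y - x) / (1 + x) := by
  have hlog := Real.log_le_sub_one_of_pos (x := (1 + y) / (1 + x)) (by positivity)
  rw [Real.log_div (by positivity) (by positivity)] at hlog
  calc Real.log (1 + y) - Real.log (1 + x) ≤ (1 + y) / (1 + x) - 1 := hlog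
    _ = (y - x) / (1 + x) := by field_simp; ring

theorem Real.abs_log_one_add_sub_log_one_add_le {x y : ℝ} (hx : 0 ≤ x) (hy : 0 ≤ y) :
    |Real.log (1 + y) - Real.log (1 + x)| ≤ |y - x| := by
  wlog hxy : x ≤ y generalizing x y
  · rw [abs_sub_comm, abs_sub_comm y]
    exact this hy hx (le_of_not_ge hxy)
  rw [abs_of_nonneg (sub_nonneg.2 (Real.log_le_log (by positivity) (by linarith))),
    abs_of_nonneg (sub_nonneg.2 hxy)]
  calc Real.log (1 + y) - Real.log (1 + x) ≤ (y - x) / (1 + x) :=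
        Real.log_one_add_sub_log_one_add_le hx hy
    _ ≤ y - x := div_le_self (sub_nonneg.2 hxy) (by linarith)

theorem mul_ciSup_le_of_forall_near_max {ι : Type*} [Nonempty ι] {w : ι → ℝ}
    (hw : BddAbove (Set.range w)) {lam K a : ℝ}
    (h : ∀ i, (⨆ j, w j) - 1 < w i → lam * w i ≤ a + K * ((⨆ j, w j) - w i)) :
    lam * ⨆ i, w i ≤ a := by
  set F := ⨆ i, w i
  obtain ⟨x, -, hx, hxw⟩ := exists_seq_tendsto_sSup (Set.range_nonempty w) hw
  choose i hi using hxw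
  have hlim : Tendsto (fun n => w (i n)) atTop (𝓝 F) := by
    rwa [show (fun n => w (i n)) = x from funext hi]
  have hnear : ∀ᶠ n in atTop, F - 1 < w (i n) := hlim.eventually (lt_mem_nhds (by linarith))
  simpa using le_of_tendsto_of_tendsto (hlim.const_mul lam)
    (((tendsto_const_nhds.sub hlim).const_mul K).const_add a) (hnear.mono fun n hn => h _ hn)

section QMatrix

variable {E : Type*} {q : E → E → ℝ}

/-- For conservative `q`, `(Qf)(i) = ∑' j, jumpIncr q f i j`. -/
noncomputable def jumpIncr (q : E → E → ℝ) (f : E → ℝ) (i j : E) : ℝ :=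
  if j = i then 0 else q i j * (f j - f i)

theorem IsQMatrix.hasSum_jumpIncr (hq : IsQMatrix q) {f : E → ℝ} {i : E} {s : ℝ}
    (hf : HasSum (fun j => if j = i then 0 else q i j * f j) s) :
    HasSum (jumpIncr q f i) (s - -q i i * f i) := by
  have hincr : jumpIncr q f i =
      fun j => (if j = i then 0 else q i j * f j) - (if j = i then 0 else q i j) * f i := by
    funext j
    unfold jumpIncr
    split_ifs <;> ring
  rw [hincr]
  exact hf.sub ((hq.2.2 i).mul_right (f i))

theorem IsLamSolution.hasSum_jumpIncr (hq : IsQMatrix q) {lam : ℝ} {u : E → ℝ}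
    (hu : IsLamSolution q lam u) (i : E) : HasSum (jumpIncr q u i) (lam * u i) := by
  convert hq.hasSum_jumpIncr (hu.2 i) using 1
  ring

theorem DriftLE.hasSum_jumpIncr (hq : IsQMatrix q) {φ : E → ℝ} {c : ℝ} (hφ : DriftLE q φ c)
    (i : E) : ∃ s ≤ c * φ i, HasSum (jumpIncr q φ i) s :=
  ⟨_, (hφ i).2, hq.hasSum_jumpIncr (hφ i).1.hasSum⟩

theorem IsQMatrix.tsum_jumpIncr_le (hq : IsQMatrix q) {f g : E → ℝ} {i : E} {ε d : ℝ}
    (hf : Summable (jumpIncr q f i)) (hg : Summable (jumpIncr q g i))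
    (hfg : ∀ j, f j - f i ≤ ε * (g j - g i) + d) :
    ∑' j, jumpIncr q f i j ≤ ε * ∑' j, jumpIncr q g i j + d * -q i i := by
  have hrow := hq.2.2 i
  rw [← hrow.tsum_eq, ← tsum_mul_left, ← tsum_mul_left,
    ← (hg.mul_left ε).tsum_add (hrow.summable.mul_left d)]
  refine hf.tsum_le_tsum (fun j => ?_) ((hg.mul_left ε).add (hrow.summable.mul_left d))
  unfold jumpIncr
  split_ifs with hji
  · simp
  · have hqij : 0 ≤ q i j := hq.1 i j (Ne.symm hji)
    nlinarith [mul_le_mul_of_nonneg_left (hfg j) hqij]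

theorem DriftLE.tsum_jumpIncr_log_one_add_le (hq : IsQMatrix q) {φ : E → ℝ} {c : ℝ}
    (hφ0 : ∀ i, 0 ≤ φ i) (hφ : DriftLE q φ c) (i : E) :
    Summable (jumpIncr q (fun j => Real.log (1 + φ j)) i) ∧
      ∑' j, jumpIncr q (fun j => Real.log (1 + φ j)) i j ≤ max c 0 := by
  obtain ⟨s, hsc, hs⟩ := hφ.hasSum_jumpIncr hq i
  have hqij : ∀ j, j ≠ i → 0 ≤ q i j := fun j hji => hq.1 i j (Ne.symm hji)
  have hφi : 0 < 1 + φ i := by linarith [hφ0 i]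
  have hsum : Summable (jumpIncr q (fun j => Real.log (1 + φ j)) i) := by
    refine hs.summable.abs.of_norm_bounded fun j => ?_
    unfold jumpIncr
    split_ifs with hji
    · simp
    · rw [Real.norm_eq_abs, abs_mul, abs_mul, abs_of_nonneg (hqij j hji)]
      exact mul_le_mul_of_nonneg_left
        (Real.abs_log_one_add_sub_log_one_add_le (hφ0 i) (hφ0 j)) (hqij j hji)
  refine ⟨hsum, ?_⟩
  have hpt : ∀ j, jumpIncr q (fun j => Real.log (1 + φ j)) i j ≤
      jumpIncr q φ i j / (1 + φ i) := by
    intro j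
    unfold jumpIncr
    split_ifs with hji
    · simp
    · rw [mul_div_assoc]
      exact mul_le_mul_of_nonneg_left
        (Real.log_one_add_sub_log_one_add_le (hφ0 i) (hφ0 j)) (hqij j hji)
  calc ∑' j, jumpIncr q (fun j => Real.log (1 + φ j)) i j
      ≤ s / (1 + φ i) := hsum.tsum_le_tsum hpt (hs.div_const _).summable |>.trans_eq
        (hs.div_const _).tsum_eq
    _ ≤ max c 0 := by
      rw [div_le_iff₀ hφi]
      nlinarith [le_max_left c 0, le_max_right c 0, hφ0 i]

theorem IsLamSolution.mul_sub_mul_le (hq : IsQMatrix q) {h : E → ℝ}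
    (hh0 : ∀ i, 0 ≤ h i) {C : ℝ}
    (hdrift : ∀ i, Summable (jumpIncr q h i) ∧ ∑' j, jumpIncr q h i j ≤ C)
    (hrate : ∀ M, ∃ K, ∀ i, h i ≤ M → -q i i ≤ K) {lam : ℝ} (hlam : 0 ≤ lam) {u : E → ℝ}
    (hu : IsLamSolution q lam u) {ε : ℝ} (hε : 0 < ε) (i₀ : E) :
    lam * (u i₀ - ε * h i₀) ≤ ε * C := by
  have : Nonempty E := ⟨i₀⟩
  have hbdd : BddAbove (Set.range fun i => u i - ε * h i) := by
    refine ⟨1, Set.forall_mem_range.2 fun i => ?_⟩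
    nlinarith [(hu.1 i).2, hh0 i]
  set F := ⨆ i, (u i - ε * h i)
  have hleF : ∀ j, u j - ε * h j ≤ F := fun j => le_ciSup hbdd j
  obtain ⟨K, hK⟩ := hrate ((2 - F) / ε)
  refine (mul_le_mul_of_nonneg_left (hleF i₀) hlam).trans <|
    mul_ciSup_le_of_forall_near_max hbdd (K := K) fun i (hi : F - 1 < u i - ε * h i) => ?_
  -- near the supremum, `ε h(i) = u(i) - (u - ε h)(i) < 1 - (F - 1)`
  have hqi : -q i i ≤ K := hK i (by rw [le_div_iff₀ hε]; linarith [(hu.1 i).2])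
  have hgap : 0 ≤ F - (u i - ε * h i) := sub_nonneg.2 (hleF i)
  calc lam * (u i - ε * h i) ≤ lam * u i :=
        mul_le_mul_of_nonneg_left (sub_le_self _ (mul_nonneg hε.le (hh0 i))) hlam
    _ = ∑' j, jumpIncr q u i j := (hu.hasSum_jumpIncr hq i).tsum_eq.symm
    _ ≤ ε * ∑' j, jumpIncr q h i j + (F - (u i - ε * h i)) * -q i i :=
        hq.tsum_jumpIncr_le (hu.hasSum_jumpIncr hq i).summable (hdrift i).1
          fun j => by linarith [hleF j]
    _ ≤ ε * C + K * (F - (u i - ε * h i)) := by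
        nlinarith [mul_le_mul_of_nonneg_left (hdrift i).2 hε.le,
          mul_le_mul_of_nonneg_left hqi hgap]

theorem IsLamSolution.eq_zero_of_lyapunov (hq : IsQMatrix q) {h : E → ℝ} (hh0 : ∀ i, 0 ≤ h i)
    {C : ℝ} (hdrift : ∀ i, Summable (jumpIncr q h i) ∧ ∑' j, jumpIncr q h i j ≤ C)
    (hrate : ∀ M, ∃ K, ∀ i, h i ≤ M → -q i i ≤ K) {lam : ℝ} (hlam : 0 < lam) {u : E → ℝ}
    (hu : IsLamSolution q lam u) : u = 0 := by
  funext i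
  have hbound : ∀ ε > 0, u i ≤ ε * (h i + C / lam) := fun ε hε => by
    have hsub : u i - ε * h i ≤ ε * C / lam := by
      rw [le_div_iff₀ hlam]
      linarith [hu.mul_sub_mul_le hq hh0 hdrift hrate hlam.le hε i]
    rw [mul_add, mul_div_assoc']
    linarith
  have hlim : Tendsto (fun ε => ε * (h i + C / lam)) (𝓝[>] 0) (𝓝 (0 * (h i + C / lam))) :=
    ((continuous_mul_const _).tendsto 0).mono_left nhdsWithin_le_nhds
  rw [zero_mul] at hlim
  exact le_antisymm (ge_of_tendsto hlim (eventually_nhdsWithin_of_forall hbound)) (hu.1 i).1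

end QMatrix

theorem uniqueness_of_drift_ge_rates_general {E : Type*} (q : E → E → ℝ)
    (hq : IsQMatrix q) (φ : E → ℝ) (hφ0 : ∀ i, 0 ≤ φ i)
    (hφq : ∀ i, -q i i ≤ φ i) (c : ℝ) (hdrift : DriftLE q φ c) :
    ∀ lam : ℝ, 0 < lam → ∀ u : E → ℝ, IsLamSolution q lam u → u = 0 := by
  intro lam hlam u hu
  refine hu.eq_zero_of_lyapunov hq (h := fun i => Real.log (1 + φ i))
    (fun i => Real.log_nonneg (by linarith [hφ0 i]))
    (hdrift.tsum_jumpIncr_log_one_add_le hq hφ0) (fun M => ⟨Real.exp M, fun i hi => ?_⟩) hlam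
  have hφM : 1 + φ i ≤ Real.exp M := (Real.log_le_iff_le_exp (by linarith [hφ0 i])).1 hi
  linarith [hφq i]

/-- Corollary 3: if there are `φ ≥ q` (pointwise, `φ` nonnegative) and a
constant `c` with `Qφ ≤ cφ`, then for every `λ > 0` the only `λ`-solution is
`0` (equivalently, the `Q`-process is unique). -/
theorem uniqueness_of_drift_ge_rates {E : Type*} [Countable E] (q : E → E → ℝ)
    (hq : IsQMatrix q) (φ : E → ℝ) (hφ0 : ∀ i, 0 ≤ φ i)
    (hφq : ∀ i, -q i i ≤ φ i) (c : ℝ) (hdrift : DriftLE q φ c) :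
    ∀ lam : ℝ, 0 < lam → ∀ u : E → ℝ, IsLamSolution q lam u → u = 0 :=
  uniqueness_of_drift_ge_rates_general q hq φ hφ0 hφq c hdrift
end

section
/- Non-uniqueness criterion, sufficiency (Theorem 4, via criterion (C3)): Let q be a totally stable, conservative Q-matrix on a countable set E. Suppose that for some constant c > 0 there exists a bounded function φ : E → ℝ with sup_{k ∈ E} φ(k) > 0 such that ∑_{j ≠ i} q(i,j)·φ(j) − q_i·φ(i) ≥ c·φ(i) for every i ∈ E (the series converges absolutely since φ is bounded). Then for every λ > 0 there exists a nonzero λ-solution (equivalently, the Q-processes are not unique). -/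
open scoped BigOperators Classical

/-!
Normalising the positive part of `φ` gives `v : E → [0,1]` with `Qv ≥ cv`. By convexity of
`t ↦ tⁿ⁺¹`, the function `vⁿ⁺¹` satisfies `Qvⁿ⁺¹ ≥ (n + 1) c vⁿ⁺¹ ≥ λ vⁿ⁺¹` once `(n + 1) c ≥ λ`.
Such a subsolution lies below the greatest fixed point (Knaster–Tarski) of the monotone map
`w ↦ (∑_{j ≠ i} q(i,j) w(j)) / (λ + q_i)` on `E → [0,1]`; that fixed point is a `λ`-solution, and it
is positive wherever `φ` is.
-/

theorem pow_succ_add_mul_sub_le {x y : ℝ} (hx : 0 ≤ x) (hy : 0 ≤ y) (n : ℕ) :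
    x ^ (n + 1) + (n + 1) * x ^ n * (y - x) ≤ y ^ (n + 1) := by
  induction n with
  | zero => simp
  | succ n ih =>
    -- the defect at `n + 1` is `y` times the defect at `n` plus `(n + 1) xⁿ (y - x)²`
    have h := add_nonneg (mul_nonneg hy (sub_nonneg.2 ih))
      (mul_nonneg (mul_nonneg (Nat.cast_add_one_pos n).le (pow_nonneg hx n)) (sq_nonneg (y - x)))
    push_cast
    linear_combination h

theorem unitInterval.abs_le_one {x : ℝ} (hx : x ∈ unitInterval) : |x| ≤ 1 :=
  abs_le.2 ⟨by linarith [hx.1], hx.2⟩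

namespace IsQMatrix

variable {E : Type*} {q : E → E → ℝ}

theorem nonneg_of_ne (hq : IsQMatrix q) {i j : E} (h : ¬j = i) : 0 ≤ q i j :=
  hq.1 i j (Ne.symm h)

theorem add_neg_diag_pos (hq : IsQMatrix q) {lam : ℝ} (hlam : 0 < lam) (i : E) :
    0 < lam + -q i i := by
  linarith [hq.2.1 i]

theorem summable_mul (hq : IsQMatrix q) {w : E → ℝ} {C : ℝ} (hw : ∀ j, |w j| ≤ C) (i : E) :
    Summable fun j => if j = i then 0 else q i j * w j := by
  refine ((hq.2.2 i).summable.mul_right C).of_norm_bounded fun j => ?_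
  split_ifs with h
  · simp
  · rw [norm_mul, Real.norm_of_nonneg (hq.nonneg_of_ne h), Real.norm_eq_abs]
    exact mul_le_mul_of_nonneg_left (hw j) (hq.nonneg_of_ne h)

theorem tsum_mul_mono (hq : IsQMatrix q) {v w : E → ℝ} {C D : ℝ} (hv : ∀ j, |v j| ≤ C)
    (hw : ∀ j, |w j| ≤ D) (hvw : ∀ j, v j ≤ w j) (i : E) :
    (∑' j, if j = i then 0 else q i j * v j) ≤ ∑' j, if j = i then 0 else q i j * w j := by
  refine (hq.summable_mul hv i).tsum_le_tsum (fun j => ?_) (hq.summable_mul hw i)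
  split_ifs with h
  · rfl
  · exact mul_le_mul_of_nonneg_left (hvw j) (hq.nonneg_of_ne h)

theorem tsum_mul_mem_Icc (hq : IsQMatrix q) {w : E → ℝ} (hw : ∀ j, w j ∈ unitInterval) (i : E) :
    (∑' j, if j = i then 0 else q i j * w j) ∈ Set.Icc 0 (-q i i) := by
  have h0 := hq.tsum_mul_mono (v := 0) (C := 0) (by simp)
    (fun j => unitInterval.abs_le_one (hw j)) (fun j => (hw j).1) i
  have h1 := hq.tsum_mul_mono (w := 1) (D := 1) (fun j => unitInterval.abs_le_one (hw j))
    (by simp) (fun j => (hw j).2) i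
  simp only [Pi.zero_apply, mul_zero, ite_self, tsum_zero, Pi.one_apply, mul_one] at h0 h1
  exact ⟨h0, h1.trans (hq.2.2 i).tsum_eq.le⟩

/-- Its fixed points are exactly the `λ`-solutions. -/
noncomputable def lamSolutionMap (hq : IsQMatrix q) {lam : ℝ} (hlam : 0 < lam) :
    (E → unitInterval) →o (E → unitInterval) where
  toFun w i :=
    ⟨(∑' j, if j = i then 0 else q i j * w j) / (lam + -q i i), by
      have hw := hq.tsum_mul_mem_Icc (fun j => (w j).2) i
      have hpos := hq.add_neg_diag_pos hlam i
      exact ⟨div_nonneg hw.1 hpos.le, (div_le_one hpos).2 (by linarith [hw.2])⟩⟩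
  monotone' v w hvw i :=
    (div_le_div_iff_of_pos_right (hq.add_neg_diag_pos hlam i)).2 <|
      hq.tsum_mul_mono (fun j => unitInterval.abs_le_one (v j).2)
        (fun j => unitInterval.abs_le_one (w j).2) (fun j => hvw j) i

theorem exists_isLamSolution_ge (hq : IsQMatrix q) {lam : ℝ} (hlam : 0 < lam) {ψ : E → ℝ}
    (hψ : ∀ i, ψ i ∈ unitInterval) (hd : DriftGE q ψ lam) :
    ∃ u, IsLamSolution q lam u ∧ ∀ i, ψ i ≤ u i := by
  set T := hq.lamSolutionMap hlam
  have hsub : (fun i => ⟨ψ i, hψ i⟩ : E → unitInterval) ≤ T (fun i => ⟨ψ i, hψ i⟩) :=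
    fun i => (le_div_iff₀ (hq.add_neg_diag_pos hlam i)).2 (by linarith [(hd i).2])
  refine ⟨fun i => T.gfp i, ⟨fun i => (T.gfp i).2, fun i => ?_⟩, fun i => T.le_gfp hsub i⟩
  have hfix : ((∑' j, if j = i then 0 else q i j * T.gfp j) / (lam + -q i i) : ℝ) = T.gfp i :=
    congrArg Subtype.val (congrFun T.map_gfp i)
  beta_reduce
  rw [← hfix, mul_div_cancel₀ _ (hq.add_neg_diag_pos hlam i).ne']
  exact (hq.summable_mul (fun j => unitInterval.abs_le_one (T.gfp j).2) i).hasSum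

end IsQMatrix

namespace DriftGE

variable {E : Type*} {q : E → E → ℝ} {φ : E → ℝ} {c : ℝ}

theorem posPart (hd : DriftGE q φ c) (hq : IsQMatrix q) :
    DriftGE q (fun i => max (φ i) 0) c := by
  intro i
  have hle : ∀ j, (if j = i then 0 else q i j * φ j) ≤
      if j = i then 0 else q i j * max (φ j) 0 := fun j => by
    split_ifs with h
    · rfl
    · exact mul_le_mul_of_nonneg_left (le_max_left _ _) (hq.nonneg_of_ne h)
  have hnonneg : ∀ j, 0 ≤ if j = i then 0 else q i j * max (φ j) 0 := fun j => by
    split_ifs with h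
    · rfl
    · exact mul_nonneg (hq.nonneg_of_ne h) (le_max_right _ _)
  have hsum : Summable fun j => if j = i then 0 else q i j * max (φ j) 0 :=
    (hd i).1.abs.of_nonneg_of_le hnonneg fun j => by
      split_ifs with h
      · simp
      · rw [abs_mul, abs_of_nonneg (hq.nonneg_of_ne h)]
        exact mul_le_mul_of_nonneg_left (max_le (le_abs_self _) (abs_nonneg _))
          (hq.nonneg_of_ne h)
  refine ⟨hsum, ?_⟩
  rcases le_or_gt (φ i) 0 with hφ | hφ
  · simp only [max_eq_right hφ, mul_zero, sub_zero]
    exact tsum_nonneg hnonneg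
  · simp only [max_eq_left hφ.le]
    linarith [(hd i).2, (hd i).1.tsum_le_tsum hle hsum]

theorem const_mul (hd : DriftGE q φ c) {a : ℝ} (ha : 0 ≤ a) :
    DriftGE q (fun i => a * φ i) c := by
  intro i
  have hmul : (fun j => if j = i then 0 else q i j * (a * φ j)) =
      fun j => a * if j = i then 0 else q i j * φ j := by
    ext j
    split_ifs <;> ring
  refine ⟨hmul ▸ (hd i).1.mul_left a, ?_⟩
  rw [hmul, tsum_mul_left]
  linear_combination mul_le_mul_of_nonneg_left (hd i).2 ha

theorem mono (hd : DriftGE q φ c) (hφ : ∀ i, 0 ≤ φ i) {c' : ℝ} (hc : c' ≤ c) :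
    DriftGE q φ c' :=
  fun i => ⟨(hd i).1, (mul_le_mul_of_nonneg_right hc (hφ i)).trans (hd i).2⟩

/-- Summing the tangent-line inequality for `t ↦ tⁿ⁺¹` at `φ i` against `q(i, ·)`. -/
theorem pow (hd : DriftGE q φ c) (hq : IsQMatrix q) (hφ : ∀ i, 0 ≤ φ i) {C : ℝ}
    (hφC : ∀ i, φ i ≤ C) (n : ℕ) : DriftGE q (fun i => φ i ^ (n + 1)) ((n + 1) * c) := by
  intro i
  have hsum : Summable fun j => if j = i then 0 else q i j * φ j ^ (n + 1) :=
    hq.summable_mul (C := C ^ (n + 1)) (fun j => by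
      rw [abs_of_nonneg (pow_nonneg (hφ j) _)]
      exact pow_le_pow_left₀ (hφ j) (hφC j) _) i
  refine ⟨hsum, ?_⟩
  beta_reduce
  set x := φ i
  set b : ℝ := (n + 1) * x ^ n
  have hb : 0 ≤ b := mul_nonneg (Nat.cast_add_one_pos n).le (pow_nonneg (hφ i) n)
  have htangent := hasSum_le (fun j => by
      split_ifs with h
      · simp
      · linear_combination mul_le_mul_of_nonneg_left (pow_succ_add_mul_sub_le (hφ i) (hφ j) n)
          (hq.nonneg_of_ne h))
    (((hq.2.2 i).mul_left (x ^ (n + 1) - b * x)).add ((hd i).1.hasSum.mul_left b)) hsum.hasSum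
  have hxb : b * x = (n + 1) * x ^ (n + 1) := by ring
  linear_combination htangent + mul_le_mul_of_nonneg_left (hd i).2 hb + c * hxb

end DriftGE

theorem non_uniqueness_of_drift_general {E : Type*} (q : E → E → ℝ)
    (hq : IsQMatrix q) (c : ℝ) (hc : 0 < c) (φ : E → ℝ)
    (hbdd : ∃ C : ℝ, ∀ i, |φ i| ≤ C) (hpos : ∃ k, 0 < φ k)
    (hdrift : DriftGE q φ c) :
    ∀ lam : ℝ, 0 < lam → ∃ u : E → ℝ, IsLamSolution q lam u ∧ u ≠ 0 := by
  intro lam hlam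
  obtain ⟨C, hC⟩ := hbdd
  obtain ⟨k, hk⟩ := hpos
  have hC0 : 0 < C := hk.trans_le ((le_abs_self _).trans (hC k))
  obtain ⟨n, hn⟩ := exists_nat_gt (lam / c)
  have hlam_le : lam ≤ (n + 1) * c := by linarith [(div_lt_iff₀ hc).1 hn]
  set v : E → ℝ := fun i => C⁻¹ * max (φ i) 0
  have hv : ∀ i, v i ∈ unitInterval := fun i =>
    ⟨by positivity, inv_mul_le_one_of_le₀ (max_le ((le_abs_self _).trans (hC i)) hC0.le) hC0.le⟩
  have hdv : DriftGE q (fun i => v i ^ (n + 1)) lam :=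
    (((hdrift.posPart hq).const_mul (inv_nonneg.2 hC0.le)).pow hq (fun i => (hv i).1)
      (fun i => (hv i).2) n).mono (fun i => pow_nonneg (hv i).1 _) hlam_le
  obtain ⟨u, hu, hvu⟩ := hq.exists_isLamSolution_ge hlam
    (fun i => ⟨pow_nonneg (hv i).1 _, pow_le_one₀ (hv i).1 (hv i).2⟩) hdv
  refine ⟨u, hu, fun hu0 => ?_⟩
  have hvk : 0 < v k ^ (n + 1) := pow_pos (mul_pos (inv_pos.2 hC0) (lt_max_of_lt_left hk)) _
  exact (hvk.trans_le (hvu k)).ne (congrFun hu0 k).symm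

/-- Non-uniqueness criterion, sufficiency (Theorem 4, via criterion (C3)):
if for some `c > 0` there is a bounded function `φ` with positive supremum
satisfying `Qφ ≥ cφ`, then for every `λ > 0` there is a nonzero `λ`-solution
(equivalently, the `Q`-processes are not unique). -/
theorem non_uniqueness_of_drift {E : Type*} [Countable E] (q : E → E → ℝ)
    (hq : IsQMatrix q) (c : ℝ) (hc : 0 < c) (φ : E → ℝ)
    (hbdd : ∃ C : ℝ, ∀ i, |φ i| ≤ C) (hpos : ∃ k, 0 < φ k)
    (hdrift : DriftGE q φ c) :
    ∀ lam : ℝ, 0 < lam → ∃ u : E → ℝ, IsLamSolution q lam u ∧ u ≠ 0 :=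
  non_uniqueness_of_drift_general q hq c hc φ hbdd hpos hdrift
end

section
/- Non-uniqueness criterion, necessity (Theorem 4, via criterion (C3)): Let q be a totally stable, conservative Q-matrix on a countable set E. Suppose that for some λ₀ > 0 there exists a nonzero λ₀-solution (equivalently, the Q-processes are not unique). Then for every constant c > 0 there exists a bounded function φ : E → ℝ with φ(i) ≥ 0 for all i and sup_{k ∈ E} φ(k) > 0 such that ∑_{j ≠ i} q(i,j)·φ(j) − q_i·φ(i) ≥ c·φ(i) for every i ∈ E. -/
open scoped BigOperators Classical

/-! Since `Q` annihilates constants and has nonnegative off-diagonal entries, it respects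
tangent-line bounds: applying `Q` to the convexity inequality
`u(j)^(n+1) ≥ u(i)^(n+1) + (n+1) u(i)^n (u(j) - u(i))` at the row `i` gives
`Q(u^(n+1))(i) ≥ (n+1) u(i)^n (Qu)(i) = (n+1) λ₀ u(i)^(n+1)` for a `λ₀`-solution `u`.
So `φ = u^(n+1)` works as soon as `(n+1) λ₀ ≥ c`. -/

lemma pow_succ_tangent_le (n : ℕ) {x y : ℝ} (hx : 0 ≤ x) (hy : 0 ≤ y) :
    y ^ (n + 1) + (n + 1) * y ^ n * (x - y) ≤ x ^ (n + 1) := by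
  rcases hy.eq_or_lt with rfl | hy
  · cases n <;> simp [pow_nonneg hx]
  have hbernoulli := one_add_mul_le_pow (a := (x - y) / y) (by
    rw [le_div_iff₀ hy]; linarith) (n + 1)
  calc y ^ (n + 1) + (n + 1) * y ^ n * (x - y)
      = y ^ (n + 1) * (1 + ((n + 1 : ℕ) : ℝ) * ((x - y) / y)) := by
        field_simp; push_cast; ring
    _ ≤ y ^ (n + 1) * (1 + (x - y) / y) ^ (n + 1) := by gcongr
    _ = x ^ (n + 1) := by rw [← mul_pow]; field_simp; ring_nf

section QMatrix

variable {E : Type*} {q : E → E → ℝ}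

lemma IsQMatrix.offDiag_mul_nonneg (hq : IsQMatrix q) {f : E → ℝ} (hf : ∀ j, 0 ≤ f j)
    (i j : E) : 0 ≤ if j = i then 0 else q i j * f j := by
  split_ifs with h
  · exact le_rfl
  · exact mul_nonneg (hq.1 i j (Ne.symm h)) (hf j)

lemma IsQMatrix.offDiag_mul_le_offDiag_mul (hq : IsQMatrix q) {f g : E → ℝ} {i : E}
    (hfg : ∀ j, j ≠ i → f j ≤ g j) (j : E) :
    (if j = i then 0 else q i j * f j) ≤ if j = i then 0 else q i j * g j := by
  split_ifs with h
  · exact le_rfl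
  · exact mul_le_mul_of_nonneg_left (hfg j h) (hq.1 i j (Ne.symm h))

lemma IsQMatrix.summable_offDiag_mul_of_le (hq : IsQMatrix q) {f g : E → ℝ} (i : E)
    (hf : ∀ j, 0 ≤ f j) (hfg : ∀ j, f j ≤ g j)
    (hg : Summable fun j => if j = i then 0 else q i j * g j) :
    Summable fun j => if j = i then 0 else q i j * f j :=
  hg.of_nonneg_of_le (hq.offDiag_mul_nonneg hf i)
    (hq.offDiag_mul_le_offDiag_mul fun j _ => hfg j)

lemma DriftGE.mono_s4 {φ : E → ℝ} {c c' : ℝ} (h : DriftGE q φ c) (hφ : ∀ i, 0 ≤ φ i)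
    (hc : c' ≤ c) : DriftGE q φ c' :=
  fun i => ⟨(h i).1, (mul_le_mul_of_nonneg_right hc (hφ i)).trans (h i).2⟩

variable {lam : ℝ} {u : E → ℝ}

lemma IsLamSolution.hasSum_offDiag_mul_affine (hq : IsQMatrix q) (hu : IsLamSolution q lam u)
    (i : E) (a b : ℝ) :
    HasSum (fun j => if j = i then 0 else q i j * (a + b * u j))
      (a * -q i i + b * ((lam + -q i i) * u i)) := by
  refine (((hq.2.2 i).mul_left a).add ((hu.2 i).mul_left b)).congr_fun fun j => ?_
  split_ifs <;> ring

lemma IsLamSolution.driftGE_pow (hq : IsQMatrix q) (hu : IsLamSolution q lam u) (n : ℕ) :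
    DriftGE q (fun i => u i ^ (n + 1)) ((n + 1) * lam) := by
  have hu0 : ∀ j, 0 ≤ u j := fun j => (hu.1 j).1
  intro i
  have hsum : Summable fun j => if j = i then 0 else q i j * u j ^ (n + 1) :=
    hq.summable_offDiag_mul_of_le i (fun j => pow_nonneg (hu0 j) _)
      (fun j => pow_le_of_le_one (hu0 j) (hu.1 j).2 n.succ_ne_zero) (hu.2 i).summable
  refine ⟨hsum, ?_⟩
  have htangent := hu.hasSum_offDiag_mul_affine hq i
    (u i ^ (n + 1) - (n + 1) * u i ^ n * u i) ((n + 1) * u i ^ n)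
  have hle := hasSum_le (hq.offDiag_mul_le_offDiag_mul fun j _ => by
    linear_combination pow_succ_tangent_le n (hu0 j) (hu0 i)) htangent hsum.hasSum
  linear_combination hle

end QMatrix

theorem drift_of_non_uniqueness_general {E : Type*} (q : E → E → ℝ)
    (hq : IsQMatrix q) (lam₀ : ℝ) (hlam₀ : 0 < lam₀)
    (hne : ∃ u : E → ℝ, IsLamSolution q lam₀ u ∧ u ≠ 0) :
    ∀ c : ℝ, 0 < c → ∃ φ : E → ℝ,
      (∃ C : ℝ, ∀ i, |φ i| ≤ C) ∧ (∀ i, 0 ≤ φ i) ∧ (∃ k, 0 < φ k) ∧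
      DriftGE q φ c := by
  intro c _
  obtain ⟨u, hu, hu_ne⟩ := hne
  obtain ⟨n, hn⟩ := exists_nat_ge (c / lam₀)
  have hc : c ≤ (n + 1) * lam₀ := by
    rw [div_le_iff₀ hlam₀] at hn
    linarith
  have hφ : ∀ i, 0 ≤ u i ^ (n + 1) := fun i => pow_nonneg (hu.1 i).1 _
  obtain ⟨k, hk⟩ := Function.ne_iff.mp hu_ne
  refine ⟨fun i => u i ^ (n + 1), ⟨1, fun i => ?_⟩, hφ,
    ⟨k, pow_pos ((hu.1 k).1.lt_of_ne' hk) _⟩, (hu.driftGE_pow hq n).mono_s4 hφ hc⟩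
  rw [abs_of_nonneg (hφ i)]
  exact pow_le_one₀ (hu.1 i).1 (hu.1 i).2

/-- Non-uniqueness criterion, necessity (Theorem 4, via criterion (C3)):
if for some `λ₀ > 0` there is a nonzero `λ₀`-solution (i.e. the `Q`-processes
are not unique), then for every `c > 0` there is a bounded nonnegative
function `φ` with positive supremum satisfying `Qφ ≥ cφ`. -/
theorem drift_of_non_uniqueness {E : Type*} [Countable E] (q : E → E → ℝ)
    (hq : IsQMatrix q) (lam₀ : ℝ) (hlam₀ : 0 < lam₀)
    (hne : ∃ u : E → ℝ, IsLamSolution q lam₀ u ∧ u ≠ 0) :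
    ∀ c : ℝ, 0 < c → ∃ φ : E → ℝ,
      (∃ C : ℝ, ∀ i, |φ i| ≤ C) ∧ (∀ i, 0 ≤ φ i) ∧ (∃ k, 0 < φ k) ∧
      DriftGE q φ c :=
  drift_of_non_uniqueness_general q hq lam₀ hlam₀ hne
end

section
/- Equivalence over the constant c in the non-uniqueness criterion (Theorem 4): Let q be a totally stable, conservative Q-matrix on a countable set E. If for SOME constant c₀ > 0 there exists a bounded function φ : E → ℝ with sup_{k ∈ E} φ(k) > 0 and ∑_{j ≠ i} q(i,j)·φ(j) − q_i·φ(i) ≥ c₀·φ(i) for every i ∈ E, then for EVERY constant c > 0 there exists a bounded function ψ : E → ℝ with ψ ≥ 0, sup_{k ∈ E} ψ(k) > 0 and ∑_{j ≠ i} q(i,j)·ψ(j) − q_i·ψ(i) ≥ c·ψ(i) for every i ∈ E. -/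
open scoped BigOperators Classical

/-!
Cutting `φ` at a level `a` below its supremum `M` does the job. Conservativity means `Q` kills
constants, so `Q(φ - a) = Qφ ≥ c₀ φ`, and passing to the positive part `ψ = (φ - a)⁺` can only
increase `Qψ` where `ψ > 0` (and gives `Qψ ≥ 0` where `ψ = 0`). Hence `Qψ ≥ c ψ` as soon as
`(c - c₀) φ ≤ c a` on `{φ > a}`, which holds for `a = max 0 (c - c₀) · M / c < M`.
-/

namespace IsQMatrix

variable {E : Type*} {q : E → E → ℝ}

theorem offDiag_mul_le_offDiag_mul_s5 (hq : IsQMatrix q) {f g : E → ℝ} (hfg : ∀ j, f j ≤ g j)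
    (i j : E) : (if j = i then 0 else q i j * f j) ≤ if j = i then 0 else q i j * g j := by
  split_ifs with hji
  · exact le_rfl
  · exact mul_le_mul_of_nonneg_left (hfg j) (hq.1 i j (Ne.symm hji))

theorem offDiag_mul_nonneg_s5 (hq : IsQMatrix q) {f : E → ℝ} (hf : ∀ j, 0 ≤ f j) (i j : E) :
    0 ≤ if j = i then 0 else q i j * f j := by
  simpa using hq.offDiag_mul_le_offDiag_mul_s5 hf i j

theorem hasSum_offDiag_mul_sub_const (hq : IsQMatrix q) {f : E → ℝ} {i : E} {s : ℝ}
    (hf : HasSum (fun j => if j = i then 0 else q i j * f j) s) (a : ℝ) :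
    HasSum (fun j => if j = i then 0 else q i j * (f j - a)) (s - -q i i * a) := by
  refine (hf.sub ((hq.2.2 i).mul_right a)).congr_fun fun j => ?_
  split_ifs <;> ring

theorem summable_offDiag_mul_posPart_sub (hq : IsQMatrix q) {f : E → ℝ} {i : E}
    (hf : Summable fun j => if j = i then 0 else q i j * f j) (a : ℝ) :
    Summable fun j => if j = i then 0 else q i j * (f j - a)⁺ := by
  refine .of_nonneg_of_le (hq.offDiag_mul_nonneg_s5 (fun j => posPart_nonneg _) i)
    (fun j => ?_) (summable_abs_iff.2 (hq.hasSum_offDiag_mul_sub_const hf.hasSum a).summable)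
  calc (if j = i then 0 else q i j * (f j - a)⁺)
      ≤ if j = i then 0 else q i j * |f j - a| :=
        hq.offDiag_mul_le_offDiag_mul_s5 (fun j => sup_le (le_abs_self _) (abs_nonneg _)) i j
    _ = |if j = i then 0 else q i j * (f j - a)| := by
        split_ifs with hji
        · simp
        · rw [abs_mul, abs_of_nonneg (hq.1 i j (Ne.symm hji))]

end IsQMatrix

theorem DriftGE.posPart_sub_const {E : Type*} {q : E → E → ℝ} (hq : IsQMatrix q) {φ : E → ℝ}
    {c₀ : ℝ} (hφ : DriftGE q φ c₀) {a c : ℝ} (hc : ∀ i, a < φ i → c * (φ i - a) ≤ c₀ * φ i) :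
    DriftGE q (fun i => (φ i - a)⁺) c := by
  intro i
  obtain ⟨hφsum, hφi⟩ := hφ i
  have hψsum := hq.summable_offDiag_mul_posPart_sub hφsum a
  refine ⟨hψsum, ?_⟩
  dsimp only
  rcases le_or_gt (φ i) a with hia | hia
  · have hψi : (φ i - a)⁺ = 0 := posPart_eq_zero.2 (sub_nonpos.2 hia)
    simpa [hψi] using tsum_nonneg (hq.offDiag_mul_nonneg_s5 (fun j => posPart_nonneg _) i)
  · have hψi : (φ i - a)⁺ = φ i - a := posPart_eq_self.2 (sub_nonneg.2 hia.le)
    have hshift := hq.hasSum_offDiag_mul_sub_const hφsum.hasSum a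
    have hcut : (∑' j, if j = i then 0 else q i j * φ j) - -q i i * a
        ≤ ∑' j, if j = i then 0 else q i j * (φ j - a)⁺ :=
      hshift.tsum_eq ▸ hshift.summable.tsum_le_tsum
        (hq.offDiag_mul_le_offDiag_mul_s5 (fun j => le_posPart _) i) hψsum
    rw [hψi]
    linarith [hc i hia]

theorem drift_const_equivalence_general {E : Type*} (q : E → E → ℝ)
    (hq : IsQMatrix q) (c₀ : ℝ) (hc₀ : 0 < c₀) (φ : E → ℝ)
    (hbdd : ∃ C : ℝ, ∀ i, |φ i| ≤ C) (hpos : ∃ k, 0 < φ k)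
    (hdrift : DriftGE q φ c₀) :
    ∀ c : ℝ, 0 < c → ∃ ψ : E → ℝ,
      (∃ C : ℝ, ∀ i, |ψ i| ≤ C) ∧ (∀ i, 0 ≤ ψ i) ∧ (∃ k, 0 < ψ k) ∧
      DriftGE q ψ c := by
  intro c hc
  obtain ⟨C, hC⟩ := hbdd
  obtain ⟨k₀, hk₀⟩ := hpos
  have hφM : ∀ i, φ i ≤ ⨆ k, φ k :=
    le_ciSup ⟨C, Set.forall_mem_range.2 fun i => (abs_le.1 (hC i)).2⟩
  set M := ⨆ k, φ k
  have hM : 0 < M := hk₀.trans_le (hφM k₀)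
  set a := max 0 (c - c₀) * M / c
  have hca : c * a = max 0 (c - c₀) * M := mul_div_cancel₀ _ hc.ne'
  have ha : 0 ≤ a := by positivity
  have haM : a < M := by
    rw [div_lt_iff₀ hc]
    exact mul_lt_mul_of_pos_right (max_lt hc (by linarith)) hM |>.trans_eq (mul_comm _ _)
  have : Nonempty E := ⟨k₀⟩
  obtain ⟨k, hk⟩ := exists_lt_of_lt_ciSup haM
  refine ⟨fun i => (φ i - a)⁺, ⟨C, fun i => ?_⟩, fun i => posPart_nonneg _,
    ⟨k, posPart_pos (sub_pos.2 hk)⟩, hdrift.posPart_sub_const hq fun i hia => ?_⟩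
  · rw [abs_of_nonneg (posPart_nonneg _)]
    exact sup_le (by linarith [(abs_le.1 (hC i)).2]) ((abs_nonneg _).trans (hC i))
  · have hφi : 0 < φ i := ha.trans_lt hia
    have h₁ := mul_le_mul_of_nonneg_right (le_max_right 0 (c - c₀)) hφi.le
    have h₂ := mul_le_mul_of_nonneg_left (hφM i) (le_max_left 0 (c - c₀))
    linarith

/-- Equivalence over the constant `c` in the non-uniqueness criterion
(Theorem 4): if for SOME `c₀ > 0` there is a bounded function `φ` with
positive supremum and `Qφ ≥ c₀ φ`, then for EVERY `c > 0` there is a bounded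
nonnegative function `ψ` with positive supremum and `Qψ ≥ cψ`. -/
theorem drift_const_equivalence {E : Type*} [Countable E] (q : E → E → ℝ)
    (hq : IsQMatrix q) (c₀ : ℝ) (hc₀ : 0 < c₀) (φ : E → ℝ)
    (hbdd : ∃ C : ℝ, ∀ i, |φ i| ≤ C) (hpos : ∃ k, 0 < φ k)
    (hdrift : DriftGE q φ c₀) :
    ∀ c : ℝ, 0 < c → ∃ ψ : E → ℝ,
      (∃ C : ℝ, ∀ i, |ψ i| ≤ C) ∧ (∀ i, 0 ≤ ψ i) ∧ (∃ k, 0 < ψ k) ∧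
      DriftGE q ψ c :=
  drift_const_equivalence_general q hq c₀ hc₀ φ hbdd hpos hdrift
end

section
/- Lemma 6 (first assertion): Let q be a totally stable, conservative Q-matrix on a countable set E, let λ > 0, and let p : E → ℝ be a probability measure on E with p(j) > 0 for every j and ∑_{j ∈ E} p(j) = 1. On the enlarged state space E_δ = E ∪ {δ} (δ a fictitious extra state) define the transition matrix Π^δ(λ) by: Π^δ_{ij}(λ) = q(i,j)/(λ + q_i) for i, j ∈ E with i ≠ j, Π^δ_{ii}(λ) = 0 for i ∈ E, Π^δ_{iδ}(λ) = λ/(λ + q_i) for i ∈ E, Π^δ_{δj}(λ) = p(j) for j ∈ E, and Π^δ_{δδ}(λ) = 0. Then the equation (λI − Q)u = 0, 0 ≤ u ≤ 1 on E has only the zero solution if and only if the equation v(i) = ∑_{j ∈ E} Π^δ_{ij}(λ)·v(j) for all i ∈ E_δ (the sum on the right extending only over j ∈ E), with 0 ≤ v ≤ 1 on E_δ, has only the zero solution. -/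
open scoped BigOperators Classical

/-- The enlarged transition matrix `Π^δ(λ)` on `E_δ = E ∪ {δ}` (realized as
`Option E`, with `δ = none`):
`Π^δ_{ij}(λ) = q(i,j)/(λ + q_i)` for `i ≠ j` in `E`, `Π^δ_{ii}(λ) = 0`,
`Π^δ_{iδ}(λ) = λ/(λ + q_i)`, `Π^δ_{δj}(λ) = p(j)`, `Π^δ_{δδ}(λ) = 0`. -/
noncomputable def PiDelta {E : Type*} (q : E → E → ℝ) (lam : ℝ) (p : E → ℝ) :
    Option E → Option E → ℝ
  | some i, some j => if j = i then 0 else q i j / (lam + -q i i)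
  | some i, none => lam / (lam + -q i i)
  | none, some j => p j
  | none, none => 0


/-!
Dividing the `λ`-equation at `i` by `λ + q_i > 0` turns it into the row equation of `Π^δ(λ)`
at `i ∈ E`, so a solution `v` on `E_δ` restricts to a solution `u` on `E`, and `u = 0` forces
`v(δ) = ∑ p(j) u(j) = 0`. Conversely a solution `u` on `E` extends to `E_δ` by
`v(δ) := ∑ p(j) u(j) ∈ [0, 1]`.
-/

section PiDelta

variable {E : Type*} {q : E → E → ℝ} {lam : ℝ} {p : E → ℝ}

theorem hasSum_piDelta_some_iff {i : E} (hi : lam + -q i i ≠ 0) (w : E → ℝ) (x : ℝ) :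
    HasSum (fun j => PiDelta q lam p (some i) (some j) * w j) x ↔
      HasSum (fun j => if j = i then 0 else q i j * w j) ((lam + -q i i) * x) := by
  have hrow : (fun j => (lam + -q i i) * (PiDelta q lam p (some i) (some j) * w j)) =
      fun j => if j = i then 0 else q i j * w j := by
    funext j
    simp only [PiDelta]
    split_ifs
    · simp
    · field_simp
  rw [← hasSum_mul_left_iff hi, hrow]

theorem hasSum_piDelta_iff (hrate : ∀ i, lam + -q i i ≠ 0) (v : Option E → ℝ) :
    (∀ i : Option E, HasSum (fun j => PiDelta q lam p i (some j) * v (some j)) (v i)) ↔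
      (∀ i, HasSum (fun j => if j = i then 0 else q i j * v (some j))
          ((lam + -q i i) * v (some i))) ∧
        HasSum (fun j => p j * v (some j)) (v none) := by
  simp only [Option.forall, hasSum_piDelta_some_iff (hrate _)]
  exact and_comm

end PiDelta

section UnitInterval

variable {E : Type*} {p u : E → ℝ}

theorem summable_mul_of_mem_unitInterval (hp : ∀ j, 0 ≤ p j) (hps : Summable p)
    (hu : ∀ j, 0 ≤ u j ∧ u j ≤ 1) : Summable fun j => p j * u j :=
  hps.of_nonneg_of_le (fun j => mul_nonneg (hp j) (hu j).1)
    fun j => mul_le_of_le_one_right (hp j) (hu j).2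

theorem tsum_mul_mem_unitInterval (hp : ∀ j, 0 ≤ p j) (hp1 : HasSum p 1)
    (hu : ∀ j, 0 ≤ u j ∧ u j ≤ 1) : 0 ≤ ∑' j, p j * u j ∧ ∑' j, p j * u j ≤ 1 := by
  refine ⟨tsum_nonneg fun j => mul_nonneg (hp j) (hu j).1, ?_⟩
  calc ∑' j, p j * u j ≤ ∑' j, p j :=
        (summable_mul_of_mem_unitInterval hp hp1.summable hu).tsum_le_tsum
          (fun j => mul_le_of_le_one_right (hp j) (hu j).2) hp1.summable
    _ = 1 := hp1.tsum_eq

end UnitInterval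

theorem enlarged_chain_equation_general {E : Type*} (q : E → E → ℝ)
    (hq : IsQMatrix q) (lam : ℝ) (hlam : 0 < lam)
    (p : E → ℝ) (hp : ∀ j, 0 < p j) (hp1 : HasSum p 1) :
    (∀ u : E → ℝ, IsLamSolution q lam u → u = 0) ↔
      (∀ v : Option E → ℝ,
        (∀ i, 0 ≤ v i ∧ v i ≤ 1) →
        (∀ i : Option E,
          HasSum (fun j : E => PiDelta q lam p i (some j) * v (some j)) (v i)) →
        v = 0) := by
  have hrate : ∀ i, lam + -q i i ≠ 0 := fun i => by linarith [hq.2.1 i]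
  constructor
  · intro hU v hv hveq
    obtain ⟨hE, hδ⟩ := (hasSum_piDelta_iff hrate v).1 hveq
    have hu : (fun i => v (some i)) = 0 := hU _ ⟨fun i => hv (some i), hE⟩
    have hvδ : HasSum (fun _ : E => (0 : ℝ)) (v none) := by simpa [congrFun hu] using hδ
    funext i
    cases i with
    | none => exact hvδ.unique hasSum_zero
    | some i => exact congrFun hu i
  · rintro hV u ⟨hub, hueq⟩
    have hp0 : ∀ j, 0 ≤ p j := fun j => (hp j).le
    set v : Option E → ℝ := fun x => x.elim (∑' j, p j * u j) u
    have hv : v = 0 := hV v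
      (Option.forall.2 ⟨tsum_mul_mem_unitInterval hp0 hp1 hub, hub⟩)
      ((hasSum_piDelta_iff hrate v).2
        ⟨hueq, (summable_mul_of_mem_unitInterval hp0 hp1.summable hub).hasSum⟩)
    exact funext fun i => congrFun hv (some i)

/-- Lemma 6 (first assertion): for `λ > 0` and a positive probability measure
`p` on `E`, the equation `(λ I - Q) u = 0`, `0 ≤ u ≤ 1` on `E` has only the
zero solution iff the equation `v(i) = ∑_{j ∈ E} Π^δ_{ij}(λ) v(j)` on
`E_δ`, `0 ≤ v ≤ 1`, has only the zero solution. -/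
theorem enlarged_chain_equation {E : Type*} [Countable E] (q : E → E → ℝ)
    (hq : IsQMatrix q) (lam : ℝ) (hlam : 0 < lam)
    (p : E → ℝ) (hp : ∀ j, 0 < p j) (hp1 : HasSum p 1) :
    (∀ u : E → ℝ, IsLamSolution q lam u → u = 0) ↔
      (∀ v : Option E → ℝ,
        (∀ i, 0 ≤ v i ∧ v i ≤ 1) →
        (∀ i : Option E,
          HasSum (fun j : E => PiDelta q lam p i (some j) * v (some j)) (v i)) →
        v = 0) :=
  enlarged_chain_equation_general q hq lam hlam p hp hp1
end

section
/- Example 8 (a test function without a limit): There exist a totally stable, conservative Q-matrix q on ℕ with sup_{i} q_i = ∞, an increasing sequence of subsets E_n ⊆ ℕ with ⋃_n E_n = ℕ and sup_{i ∈ E_n} q_i < ∞ for every n (some E_n being infinite), a nonnegative function φ : ℕ → [0,∞), and a constant c ∈ ℝ, such that: lim_{n→∞} inf_{i ∉ E_n} φ(i) = ∞ (with the convention inf_∅ = ∞); Qφ ≤ cφ; limsup_{n→∞} φ(n) = ∞; and liminf_{n→∞} φ(n) = 1. In particular, the conditions (U1) and (U2) of the uniqueness criterion can hold with a test function φ that has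 no limit at infinity. -/
open scoped BigOperators Classical

/-!
Make the even states absorbing and let an odd state `i` jump to `0` at rate `i`. The test
function `φ` equals `i` at odd `i` and `1` at even `i`, so `Qφ(i) = i (1 - i) ≤ 0` at odd `i`
and `Qφ = 0` elsewhere. Taking `E_n` to be the even numbers together with `{0, …, n}`, the
rates are bounded by `n` on `E_n` and `φ > n` off `E_n`, while `φ` oscillates between the
values `1` and `i`.
-/

noncomputable def jumpTo {E : Type*} (o : E) (r : E → ℝ) : E → E → ℝ :=
  fun i j => if j = i then -r i else if j = o then r i else 0

section JumpTo

variable {E : Type*} {o : E} {r : E → ℝ}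

@[simp]
lemma neg_jumpTo_self (i : E) : -jumpTo o r i i = r i := by
  simp [jumpTo]

lemma hasSum_jumpTo_mul (hro : r o = 0) (φ : E → ℝ) (i : E) :
    HasSum (fun j => if j = i then 0 else jumpTo o r i j * φ j) (r i * φ o) := by
  have hrow : (fun j => if j = i then 0 else jumpTo o r i j * φ j) =
      fun j => if j = o then r i * φ o else 0 := by
    funext j
    by_cases hji : j = i <;> by_cases hjo : j = o <;> simp_all [jumpTo]
  rw [hrow]
  exact hasSum_ite_eq o _

lemma isQMatrix_jumpTo (hr : ∀ i, 0 ≤ r i) (hro : r o = 0) : IsQMatrix (jumpTo o r) := by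
  refine ⟨fun i j hij => ?_, fun i => by simpa [jumpTo] using hr i, fun i => ?_⟩
  · simp only [jumpTo, Ne.symm hij, if_false]
    split_ifs
    exacts [hr i, le_rfl]
  · simpa [jumpTo] using hasSum_jumpTo_mul hro (fun _ => 1) i

lemma driftLE_jumpTo (hro : r o = 0) {φ : E → ℝ} {c : ℝ}
    (hφ : ∀ i, r i * (φ o - φ i) ≤ c * φ i) : DriftLE (jumpTo o r) φ c := by
  intro i
  have hsum := hasSum_jumpTo_mul hro φ i
  refine ⟨hsum.summable, ?_⟩
  rw [hsum.tsum_eq]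
  simpa [jumpTo, mul_sub] using hφ i

end JumpTo

noncomputable def oddRate (i : ℕ) : ℝ := if Odd i then i else 0

lemma oddRate_nonneg (i : ℕ) : 0 ≤ oddRate i := by
  unfold oddRate
  split_ifs <;> positivity

lemma oddRate_le_of_even_or_le {i n : ℕ} (h : Even i ∨ i ≤ n) : oddRate i ≤ n := by
  unfold oddRate
  split_ifs with hodd
  · exact_mod_cast h.resolve_left (Nat.not_even_iff_odd.2 hodd)
  · positivity

noncomputable def oscillatingTestFn (i : ℕ) : ℝ := if Odd i then i else 1

lemma oscillatingTestFn_of_odd {i : ℕ} (hi : Odd i) : oscillatingTestFn i = i := if_pos hi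

lemma oscillatingTestFn_of_even {i : ℕ} (hi : Even i) : oscillatingTestFn i = 1 :=
  if_neg (Nat.not_odd_iff_even.2 hi)

lemma one_le_oscillatingTestFn (i : ℕ) : 1 ≤ oscillatingTestFn i := by
  rcases i.even_or_odd with hi | hi
  · rw [oscillatingTestFn_of_even hi]
  · rw [oscillatingTestFn_of_odd hi]
    exact_mod_cast hi.pos

lemma oddRate_mul_sub_oscillatingTestFn_nonpos (i : ℕ) :
    oddRate i * (oscillatingTestFn 0 - oscillatingTestFn i) ≤ 0 := by
  rw [oscillatingTestFn_of_even Even.zero]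
  exact mul_nonpos_of_nonneg_of_nonpos (oddRate_nonneg i)
    (sub_nonpos.2 (one_le_oscillatingTestFn i))

lemma exists_odd_ge (M : ℝ) (N : ℕ) : ∃ n ≥ N, Odd n ∧ M ≤ n := by
  obtain ⟨k, hk⟩ := exists_nat_ge M
  refine ⟨2 * (k + N) + 1, by omega, odd_two_mul_add_one _, hk.trans ?_⟩
  exact_mod_cast (show k ≤ 2 * (k + N) + 1 by omega)

/-- Example 8 (a test function without a limit): there exist a totally
stable, conservative Q-matrix `q` on `ℕ` with unbounded rates, an increasing
sequence of subsets `En ⊆ ℕ` exhausting `ℕ` with bounded rates on each `En`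
(some `En` being infinite), a nonnegative function `φ` and a constant `c`
such that `lim_n inf_{i ∉ En} φ i = ∞`, `Qφ ≤ cφ`,
`limsup_n φ n = ∞` and `liminf_n φ n = 1`. -/
theorem test_function_without_limit :
    ∃ (q : ℕ → ℕ → ℝ) (En : ℕ → Set ℕ) (φ : ℕ → ℝ) (c : ℝ),
      IsQMatrix q ∧
      -- `sup_i q_i = ∞`
      (∀ M : ℝ, ∃ i, M ≤ -q i i) ∧
      -- increasing exhausting sequence with bounded rates on each `En`
      (∀ n, En n ⊆ En (n + 1)) ∧
      (⋃ n, En n) = Set.univ ∧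
      (∀ n, ∃ M : ℝ, ∀ i ∈ En n, -q i i ≤ M) ∧
      (∃ n, (En n).Infinite) ∧
      -- (U1): nonnegative `φ` with `lim_n inf_{i ∉ En} φ i = ∞`
      (∀ i, 0 ≤ φ i) ∧
      (∀ M : ℝ, ∃ N : ℕ, ∀ n ≥ N, ∀ i ∉ En n, M ≤ φ i) ∧
      -- (U2): `Qφ ≤ cφ`
      DriftLE q φ c ∧
      -- `limsup_n φ n = ∞`
      (∀ M : ℝ, ∀ N : ℕ, ∃ n ≥ N, M ≤ φ n) ∧
      -- `liminf_n φ n = 1`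
      (∀ ε : ℝ, 0 < ε → ∃ N : ℕ, ∀ n ≥ N, 1 - ε < φ n) ∧
      (∀ ε : ℝ, 0 < ε → ∀ N : ℕ, ∃ n ≥ N, φ n < 1 + ε) := by
  refine ⟨jumpTo 0 oddRate, fun n => {i | Even i ∨ i ≤ n}, oscillatingTestFn, 0,
    isQMatrix_jumpTo oddRate_nonneg (by simp [oddRate]), fun M => ?_,
    fun n i hi => hi.imp_right (·.trans n.le_succ),
    Set.eq_univ_of_forall fun i => Set.mem_iUnion.2 ⟨i, Or.inr le_rfl⟩,
    fun n => ⟨n, fun i hi => by simpa using oddRate_le_of_even_or_le hi⟩,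
    ⟨0, (Nat.frequently_atTop_iff_infinite.1 Nat.frequently_even).mono fun i => Or.inl⟩,
    fun i => zero_le_one.trans (one_le_oscillatingTestFn i), fun M => ?_,
    driftLE_jumpTo (by simp [oddRate]) (by simpa using oddRate_mul_sub_oscillatingTestFn_nonpos),
    fun M N => ?_, fun ε hε => ⟨0, fun n _ => by linarith [one_le_oscillatingTestFn n]⟩,
    fun ε hε N => ⟨2 * N, by omega, by simpa [oscillatingTestFn_of_even (even_two_mul N)]⟩⟩
  · obtain ⟨n, -, hn, hMn⟩ := exists_odd_ge M 0
    exact ⟨n, by simpa [oddRate, hn] using hMn⟩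
  · obtain ⟨N, hN⟩ := exists_nat_ge M
    refine ⟨N, fun n hn i hi => ?_⟩
    simp only [Set.mem_ofPred_eq, not_or, not_le, Nat.not_even_iff_odd] at hi
    rw [oscillatingTestFn_of_odd hi.1]
    exact hN.trans (by exact_mod_cast hn.trans hi.2.le)
  · obtain ⟨n, hn, hodd, hMn⟩ := exists_odd_ge M N
    exact ⟨n, hn, by rwa [oscillatingTestFn_of_odd hodd]⟩
end
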